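/- Let J : X_fin × X_fin → ℂ be a kernel such that J − K is positive definite on X_fin and (LJ)(s,t) = ∑_{i=1}^m J(φ_i(s),φ_i(t)) = J(s,t) for all s,t ∈ X_fin (meaningful since each φ_i maps X_fin into itself). Then J − K_∞ is positive definite on X_fin; that is, K_∞ is the smallest L-invariant majorant of K on X_fin in the kernel order. -/

import Mathlib

open Filter Topology
open scoped BigOperators ComplexOrder ENNReal

/-- A kernel `J : X × X → ℂ` is positive definite: every finite Gram sum
`∑ conj (c α) * c β * J (s α) (s β)` is a nonnegative real number
(using the partial order on `ℂ`). -/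
def IsPD {X : Type*} (J : X → X → ℂ) : Prop :=
  ∀ (r : ℕ) (c : Fin r → ℂ) (p : Fin r → X),
    0 ≤ ∑ α, ∑ β, (starRingEnd ℂ) (c α) * c β * J (p α) (p β)

/-- The pullback operator `(LJ)(s,t) = ∑ i, J (φ i s) (φ i t)`. -/
noncomputable def pullback {X : Type*} (m : ℕ) (φ : Fin m → X → X) (J : X → X → ℂ) :
    X → X → ℂ :=
  fun s t => ∑ i, J (φ i s) (φ i t)

/-- For a word `w = i₁⋯iₙ ∈ {1,…,m}ⁿ`, `phiW φ w = φ_{iₙ} ∘ ⋯ ∘ φ_{i₁}`. -/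
def phiW {X : Type*} {m : ℕ} (φ : Fin m → X → X) : {n : ℕ} → (Fin n → Fin m) → X → X
  | 0, _, x => x
  | n + 1, w, x => φ (w (Fin.last n)) (phiW φ (fun i => w i.castSucc) x)

/-- The tower `K₀ = K`, `K_{n+1} = L Kₙ`. -/
noncomputable def tower {X : Type*} (m : ℕ) (φ : Fin m → X → X) (K : X → X → ℂ) :
    ℕ → X → X → ℂ
  | 0 => K
  | n + 1 => pullback m φ (tower m φ K n)

/-- The diagonal `uₙ(s) = Kₙ(s,s)` (a real number, as `Kₙ` is p.d.). -/
noncomputable def diag {X : Type*} (m : ℕ) (φ : Fin m → X → X) (K : X → X → ℂ)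
    (n : ℕ) (s : X) : ℝ :=
  (tower m φ K n s s).re

/-- The diagonal increment `a_s(w) = u_{|w|+1}(φ_w s) − u_{|w|}(φ_w s)`. -/
noncomputable def incr {X : Type*} (m : ℕ) (φ : Fin m → X → X) (K : X → X → ℂ)
    (s : X) {k : ℕ} (w : Fin k → Fin m) : ℝ :=
  diag m φ K (k + 1) (phiW φ w s) - diag m φ K k (phiW φ w s)

/-- The finiteness locus `X_fin = {s : u_∞(s) = lim uₙ(s) < ∞}` (the monotone
sequence `uₙ(s)` has a finite limit). -/
def Xfin {X : Type*} (m : ℕ) (φ : Fin m → X → X) (K : X → X → ℂ) : Set X :=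
  {s | ∃ l : ℝ, Filter.Tendsto (fun n => diag m φ K n s) Filter.atTop (nhds l)}

/-- Positive definiteness of a kernel restricted to a subset `Y ⊆ X`. -/
def IsPDOn {X : Type*} (Y : Set X) (J : X → X → ℂ) : Prop :=
  ∀ (r : ℕ) (c : Fin r → ℂ) (p : Fin r → X), (∀ α, p α ∈ Y) →
    0 ≤ ∑ α, ∑ β, (starRingEnd ℂ) (c α) * c β * J (p α) (p β)

/-!
On `X_fin` the invariance of `J` gives `J - K_{n+1} = L (J - K_n)`, and `L` preserves positive
definiteness on any set mapped into itself by the `φ i`; so `J - K_n` is positive definite on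
`X_fin` for every `n`, and nonnegativity of Gram sums passes to the pointwise limit `J - K_∞`.
The maps `φ i` preserve `X_fin` because `u_n (φ i s) ≤ ∑ j, u_n (φ j s) = u_{n+1} s`.
-/

open Set

section Kernels

variable {X : Type*}

lemma isPDOn_univ_iff {J : X → X → ℂ} : IsPDOn univ J ↔ IsPD J :=
  ⟨fun h r c p => h r c p fun _ => mem_univ _, fun h r c p _ => h r c p⟩

lemma IsPDOn.congr {Y : Set X} {J J' : X → X → ℂ} (hJ : IsPDOn Y J)
    (h : ∀ s ∈ Y, ∀ t ∈ Y, J s t = J' s t) : IsPDOn Y J' := by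
  intro r c p hp
  have hsum : ∑ α, ∑ β, starRingEnd ℂ (c α) * c β * J' (p α) (p β) =
      ∑ α, ∑ β, starRingEnd ℂ (c α) * c β * J (p α) (p β) :=
    Finset.sum_congr rfl fun α _ => Finset.sum_congr rfl fun β _ => by
      rw [h _ (hp α) _ (hp β)]
  exact hsum ▸ hJ r c p hp

lemma IsPDOn.of_tendsto {ι : Type*} {l : Filter ι} [l.NeBot] {Y : Set X}
    {F : ι → X → X → ℂ} {J : X → X → ℂ} (hF : ∀ᶠ n in l, IsPDOn Y (F n))
    (hlim : ∀ s ∈ Y, ∀ t ∈ Y, Tendsto (fun n => F n s t) l (𝓝 (J s t))) : IsPDOn Y J := by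
  intro r c p hp
  refine ge_of_tendsto (tendsto_finsetSum _ fun α _ => tendsto_finsetSum _ fun β _ =>
    (hlim _ (hp α) _ (hp β)).const_mul _) ?_
  filter_upwards [hF] with n hn using hn r c p hp

lemma IsPD.re_apply_self_nonneg {J : X → X → ℂ} (hJ : IsPD J) (s : X) : 0 ≤ (J s s).re := by
  have h := hJ 1 (fun _ => 1) (fun _ => s)
  simp only [Fin.sum_univ_one, map_one, one_mul] at h
  exact (Complex.le_def.mp h).1

end Kernels

section Pullback

variable {X : Type*} (m : ℕ) (φ : Fin m → X → X)

lemma sum_sum_mul_pullback (J : X → X → ℂ) {r : ℕ} (c : Fin r → ℂ) (p : Fin r → X) :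
    ∑ α, ∑ β, starRingEnd ℂ (c α) * c β * pullback m φ J (p α) (p β) =
      ∑ i, ∑ α, ∑ β, starRingEnd ℂ (c α) * c β * J (φ i (p α)) (φ i (p β)) := by
  simp only [pullback, Finset.mul_sum]
  exact (Finset.sum_congr rfl fun α _ => Finset.sum_comm).trans Finset.sum_comm

lemma pullback_sub (J J' : X → X → ℂ) :
    pullback m φ (fun s t => J s t - J' s t) =
      fun s t => pullback m φ J s t - pullback m φ J' s t := by
  funext s t
  simp only [pullback, Finset.sum_sub_distrib]

variable {m φ}

lemma IsPDOn.pullback {Y : Set X} (hφ : ∀ i, MapsTo (φ i) Y Y) {J : X → X → ℂ}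
    (hJ : IsPDOn Y J) : IsPDOn Y (pullback m φ J) := by
  intro r c p hp
  rw [sum_sum_mul_pullback]
  exact Finset.sum_nonneg fun i _ => hJ r c (fun α => φ i (p α)) fun α => hφ i (hp α)

lemma IsPD.pullback {J : X → X → ℂ} (hJ : IsPD J) : IsPD (pullback m φ J) :=
  isPDOn_univ_iff.mp ((isPDOn_univ_iff.mpr hJ).pullback fun _ => mapsTo_univ _ _)

end Pullback

section Tower

variable {X : Type*} {m : ℕ} {φ : Fin m → X → X} {K : X → X → ℂ}

lemma isPD_tower (hK : IsPD K) : ∀ n, IsPD (tower m φ K n)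
  | 0 => hK
  | n + 1 => (isPD_tower hK n).pullback

lemma isPD_tower_succ_sub (hsub : IsPD (fun s t => pullback m φ K s t - K s t)) :
    ∀ n, IsPD (fun s t => tower m φ K (n + 1) s t - tower m φ K n s t)
  | 0 => hsub
  | n + 1 => by
    have h := (isPD_tower_succ_sub hsub n).pullback (m := m) (φ := φ)
    rwa [pullback_sub] at h

lemma diag_nonneg (hK : IsPD K) (n : ℕ) (s : X) : 0 ≤ diag m φ K n s :=
  (isPD_tower hK n).re_apply_self_nonneg s

lemma diag_monotone (hsub : IsPD (fun s t => pullback m φ K s t - K s t)) (s : X) :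
    Monotone fun n => diag m φ K n s := by
  refine monotone_nat_of_le_succ fun n => ?_
  have h := (isPD_tower_succ_sub hsub n).re_apply_self_nonneg s
  simp only [Complex.sub_re, diag] at h ⊢
  linarith

lemma diag_succ (n : ℕ) (s : X) : diag m φ K (n + 1) s = ∑ j, diag m φ K n (φ j s) := by
  simp only [diag, tower, pullback, Complex.re_sum]

lemma mapsTo_Xfin (hK : IsPD K) (hsub : IsPD (fun s t => pullback m φ K s t - K s t))
    (i : Fin m) : MapsTo (φ i) (Xfin m φ K) (Xfin m φ K) := by
  rintro s ⟨l, hl⟩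
  have hbdd : ∀ n, diag m φ K n (φ i s) ≤ l := fun n =>
    calc diag m φ K n (φ i s) ≤ ∑ j, diag m φ K n (φ j s) :=
          Finset.single_le_sum (fun j _ => diag_nonneg hK n (φ j s)) (Finset.mem_univ i)
      _ = diag m φ K (n + 1) s := (diag_succ n s).symm
      _ ≤ l := (diag_monotone hsub s).ge_of_tendsto hl (n + 1)
  exact ⟨_, tendsto_atTop_ciSup (diag_monotone hsub _) ⟨l, forall_mem_range.mpr hbdd⟩⟩

end Tower

theorem stmt8_general {X : Type*} (m : ℕ) (φ : Fin m → X → X)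
    (K : X → X → ℂ) (hK : IsPD K)
    (hsub : IsPD (fun s t => pullback m φ K s t - K s t))
    (Kinf : X → X → ℂ)
    (hKinf : ∀ s ∈ Xfin m φ K, ∀ t ∈ Xfin m φ K,
      Tendsto (fun n => tower m φ K n s t) atTop (𝓝 (Kinf s t)))
    (J : X → X → ℂ)
    (hJK : IsPDOn (Xfin m φ K) (fun s t => J s t - K s t))
    (hJinv : ∀ s ∈ Xfin m φ K, ∀ t ∈ Xfin m φ K,
      ∑ i : Fin m, J (φ i s) (φ i t) = J s t) :
    IsPDOn (Xfin m φ K) (fun s t => J s t - Kinf s t) := by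
  have hφ := mapsTo_Xfin hK hsub
  have hJ_sub_tower : ∀ n, IsPDOn (Xfin m φ K) (fun s t => J s t - tower m φ K n s t) := by
    intro n
    induction n with
    | zero => exact hJK
    | succ n ih =>
      refine (ih.pullback hφ).congr fun s hs t ht => ?_
      rw [pullback_sub]
      exact congrArg (· - tower m φ K (n + 1) s t) (hJinv s hs t ht)
  exact IsPDOn.of_tendsto (Eventually.of_forall hJ_sub_tower) fun s hs t ht =>
    tendsto_const_nhds.sub (hKinf s hs t ht)

/-- Minimality of the invariant completion: any `L`-invariant majorant `J` of `K`
on `X_fin` dominates `K_∞` in the kernel order. -/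
theorem stmt8 {X : Type*} (m : ℕ) (hm : 1 ≤ m) (φ : Fin m → X → X)
    (K : X → X → ℂ) (hK : IsPD K)
    (hsub : IsPD (fun s t => pullback m φ K s t - K s t))
    (Kinf : X → X → ℂ)
    (hKinf : ∀ s ∈ Xfin m φ K, ∀ t ∈ Xfin m φ K,
      Tendsto (fun n => tower m φ K n s t) atTop (𝓝 (Kinf s t)))
    (J : X → X → ℂ)
    (hJK : IsPDOn (Xfin m φ K) (fun s t => J s t - K s t))
    (hJinv : ∀ s ∈ Xfin m φ K, ∀ t ∈ Xfin m φ K,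
      ∑ i : Fin m, J (φ i s) (φ i t) = J s t) :
    IsPDOn (Xfin m φ K) (fun s t => J s t - Kinf s t) :=
  stmt8_general m φ K hK hsub Kinf hKinf J hJK hJinv
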